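/- arXiv:2403.04082 — 2 statements merged into one kernel-verified Lean document; each statement's English description precedes it below -/
import Mathlib

section
/- Let k ≥ 1, c > 0, let A be a k × k real matrix, and let ψ₀, ψ_T ∈ ℝ^k. Define Λ = (c/(c+1))·AᵀA + ((c+1)/c)·I and μ = Λ⁻¹(Aᵀψ_T + Aψ₀), and define g : ℝ^k → ℝ by g(w) = exp(-((c+1)/(2c))·‖(c/(c+1))·Aw - ψ_T‖²)·exp(-((c+1)/(2c))·‖(c/(c+1))·Aψ₀ - w‖²). Then 0 < ∫ g(w) dw < ∞, and for every w ∈ ℝ^k, g(w)/(∫ g) = (2π)^{-k/2}·(det Λ)^{1/2}·exp(-½·⟨w - μ, Λ(w - μ)⟩); that is, the normalized product is exactly the multivariate Gaussian density with mean μ and covariance Λ⁻¹. -/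
open Matrix MeasureTheory Real RealInnerProductSpace

/-!
After writing the exponents as inner products, the sum of the two exponents is a quadratic
function of `w` with Hessian `-Λ` and linear part `⟪Aᵀψ_T + Aψ₀, w⟫`, so completing the square
around `μ = Λ⁻¹(Aᵀψ_T + Aψ₀)` turns `g` into a positive constant times
`exp (-½⟪w - μ, Λ (w - μ)⟫)`. The integral of the latter is `(2π)^(k/2) / √(det Λ)`: factor
`Λ = BᵀB`, so that the quadratic form is `‖Bv‖²`, and change variables along `B`, whose Jacobian is
`|det B| = √(det Λ)`. The constant cancels in `g / ∫ g`.
-/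

theorem integral_comp_linearMap {E F : Type*} [NormedAddCommGroup E] [NormedSpace ℝ E]
    [FiniteDimensional ℝ E] [MeasurableSpace E] [BorelSpace E] [NormedAddCommGroup F]
    [NormedSpace ℝ F] (μ : Measure E) [μ.IsAddHaarMeasure] {f : E →ₗ[ℝ] E}
    (hf : LinearMap.det f ≠ 0) (g : E → F) :
    ∫ x, g (f x) ∂μ = |(LinearMap.det f)⁻¹| • ∫ x, g x ∂μ := by
  have hf_emb : MeasurableEmbedding f :=
    (LinearMap.equivOfDetNeZero f hf).toContinuousLinearEquiv.toHomeomorph.measurableEmbedding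
  rw [← hf_emb.integral_map, Measure.map_linearMap_addHaar_eq_smul_addHaar μ hf,
    integral_smul_measure, ENNReal.toReal_ofReal (abs_nonneg _)]

section

variable {ι : Type*} [Fintype ι]

theorem integral_exp_neg_half_norm_sq :
    ∫ v : EuclideanSpace ℝ ι, exp (-(1 / 2) * ‖v‖ ^ 2) = (2 * π) ^ ((Fintype.card ι : ℝ) / 2) := by
  rw [GaussianFourier.integral_rexp_neg_mul_sq_norm (by norm_num), finrank_euclideanSpace]
  norm_num [div_div_eq_mul_div, mul_comm]

variable [DecidableEq ι]

theorem inner_toEuclideanLin_left (B : Matrix ι ι ℝ) (x y : EuclideanSpace ℝ ι) :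
    ⟪toEuclideanLin B x, y⟫ = ⟪x, toEuclideanLin Bᵀ y⟫ := by
  rw [← conjTranspose_eq_transpose_of_trivial, toEuclideanLin_conjTranspose_eq_adjoint,
    LinearMap.adjoint_inner_right]

theorem inner_toEuclideanLin_transpose_mul_self (B : Matrix ι ι ℝ) (x : EuclideanSpace ℝ ι) :
    ⟪x, toEuclideanLin (Bᵀ * B) x⟫ = ‖toEuclideanLin B x‖ ^ 2 := by
  rw [toLpLin_mul_same, LinearMap.comp_apply, ← inner_toEuclideanLin_left,
    real_inner_self_eq_norm_sq]

theorem LinearMap.det_toEuclideanLin (B : Matrix ι ι ℝ) :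
    LinearMap.det (toEuclideanLin B) = B.det :=
  LinearMap.det_toLin (PiLp.basisFun 2 ℝ ι) B

open scoped MatrixOrder in
theorem Matrix.PosDef.integral_exp_neg_half_inner {M : Matrix ι ι ℝ} (hM : M.PosDef) :
    ∫ v : EuclideanSpace ℝ ι, exp (-(1 / 2) * ⟪v, toEuclideanLin M v⟫) =
      (2 * π) ^ ((Fintype.card ι : ℝ) / 2) / √M.det := by
  obtain ⟨B, rfl⟩ := CStarAlgebra.nonneg_iff_eq_star_mul_self.mp hM.posSemidef.nonneg
  rw [star_eq_conjTranspose, conjTranspose_eq_transpose_of_trivial] at hM ⊢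
  have hdet : √(Bᵀ * B).det = |B.det| := by
    rw [det_mul, det_transpose, sqrt_mul_self_eq_abs]
  have hB : LinearMap.det (toEuclideanLin B) ≠ 0 := by
    rw [LinearMap.det_toEuclideanLin, ← abs_pos, ← hdet]
    exact sqrt_pos.mpr hM.det_pos
  simp_rw [inner_toEuclideanLin_transpose_mul_self]
  rw [integral_comp_linearMap volume hB (fun v => exp (-(1 / 2) * ‖v‖ ^ 2)),
    integral_exp_neg_half_norm_sq, hdet, LinearMap.det_toEuclideanLin, abs_inv, smul_eq_mul,
    inv_mul_eq_div]

theorem LinearMap.IsSymmetric.inner_sub_map_sub {E : Type*} [NormedAddCommGroup E]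
    [InnerProductSpace ℝ E] {T : E →ₗ[ℝ] E} (hT : T.IsSymmetric) (x y : E) :
    ⟪x - y, T (x - y)⟫ = ⟪x, T x⟫ - 2 * ⟪T y, x⟫ + ⟪y, T y⟫ := by
  rw [map_sub, inner_sub_left, inner_sub_right, inner_sub_right, real_inner_comm (T y) x, hT y x]
  ring

theorem Matrix.posDef_smul_transpose_mul_self_add_smul_one {a b : ℝ} (ha : 0 ≤ a) (hb : 0 < b)
    (A : Matrix ι ι ℝ) : (a • (Aᵀ * A) + b • 1).PosDef := by
  have hAA : (Aᵀ * A).PosSemidef := by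
    simpa only [conjTranspose_eq_transpose_of_trivial] using posSemidef_conjTranspose_mul_self A
  exact PosDef.posSemidef_add (hAA.smul ha) (PosDef.one.smul hb)

theorem Matrix.PosDef.integral_const_mul_exp_neg_half_inner_sub {M : Matrix ι ι ℝ}
    (hM : M.PosDef) (m : EuclideanSpace ℝ ι) (C : ℝ) :
    ∫ w : EuclideanSpace ℝ ι, C * exp (-(1 / 2) * ⟪w - m, toEuclideanLin M (w - m)⟫) =
      C * ((2 * π) ^ ((Fintype.card ι : ℝ) / 2) / √M.det) := by
  rw [integral_const_mul, integral_sub_right_eq_self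
    (fun v => exp (-(1 / 2) * ⟪v, toEuclideanLin M v⟫)) m, hM.integral_exp_neg_half_inner]

theorem Matrix.PosDef.gaussian_normalization {M : Matrix ι ι ℝ} (hM : M.PosDef)
    (m : EuclideanSpace ℝ ι) {C : ℝ} (hC : 0 < C) :
    let g : EuclideanSpace ℝ ι → ℝ :=
      fun w => C * exp (-(1 / 2) * ⟪w - m, toEuclideanLin M (w - m)⟫)
    Integrable g volume ∧ (0 < ∫ w, g w) ∧
      ∀ w, g w / (∫ w', g w') = (2 * π) ^ (-(Fintype.card ι : ℝ) / 2) * √M.det *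
        exp (-(1 / 2) * ⟪w - m, toEuclideanLin M (w - m)⟫) := by
  intro g
  have hint : ∫ w, g w = C * ((2 * π) ^ ((Fintype.card ι : ℝ) / 2) / √M.det) :=
    hM.integral_const_mul_exp_neg_half_inner_sub m C
  have hdet : 0 < √M.det := sqrt_pos.mpr hM.det_pos
  have hpos : 0 < ∫ w, g w := by rw [hint]; positivity
  -- A non-integrable function has Bochner integral `0`, so integrability comes for free.
  refine ⟨.of_integral_ne_zero hpos.ne', hpos, fun w => ?_⟩
  rw [hint, neg_div, rpow_neg (by positivity)]
  simp only [g]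
  field_simp

theorem gaussian_factors_exponent {c : ℝ} (hc : 0 < c) (A : Matrix ι ι ℝ)
    (ψ₀ ψT w : EuclideanSpace ℝ ι) :
    -((c + 1) / (2 * c)) * ‖(c / (c + 1)) • toEuclideanLin A w - ψT‖ ^ 2 +
        -((c + 1) / (2 * c)) * ‖(c / (c + 1)) • toEuclideanLin A ψ₀ - w‖ ^ 2 =
      -(1 / 2) * ⟪w, toEuclideanLin ((c / (c + 1)) • (Aᵀ * A) + ((c + 1) / c) • 1) w⟫ +
        ⟪toEuclideanLin Aᵀ ψT + toEuclideanLin A ψ₀, w⟫ -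
        (c + 1) / (2 * c) * (‖ψT‖ ^ 2 + (c / (c + 1)) ^ 2 * ‖toEuclideanLin A ψ₀‖ ^ 2) := by
  have hc1 : 0 < c + 1 := by linarith
  rw [map_add, map_smul, map_smul, LinearMap.add_apply, LinearMap.smul_apply,
    LinearMap.smul_apply, toLpLin_one, LinearMap.id_apply, inner_add_right, inner_smul_right,
    inner_smul_right, inner_toEuclideanLin_transpose_mul_self, inner_add_left,
    inner_toEuclideanLin_left Aᵀ, transpose_transpose, real_inner_comm _ ψT, norm_sub_sq_real,
    norm_sub_sq_real, norm_smul, norm_smul, inner_smul_left, inner_smul_left,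
    real_inner_self_eq_norm_sq]
  simp only [Real.norm_eq_abs, abs_of_pos (div_pos hc hc1), conj_trivial]
  field_simp
  ring

end

theorem stmt_5_general (k : ℕ) (c : ℝ) (hc : 0 < c)
    (A : Matrix (Fin k) (Fin k) ℝ) (ψ₀ ψT : EuclideanSpace ℝ (Fin k)) :
    let Λ : Matrix (Fin k) (Fin k) ℝ :=
      (c / (c + 1)) • (Aᵀ * A) + ((c + 1) / c) • (1 : Matrix (Fin k) (Fin k) ℝ)
    let μ : EuclideanSpace ℝ (Fin k) :=
      Matrix.toEuclideanLin Λ⁻¹ (Matrix.toEuclideanLin Aᵀ ψT + Matrix.toEuclideanLin A ψ₀)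
    let g : EuclideanSpace ℝ (Fin k) → ℝ := fun w =>
      Real.exp (-((c + 1) / (2 * c)) * ‖(c / (c + 1)) • Matrix.toEuclideanLin A w - ψT‖ ^ 2) *
      Real.exp (-((c + 1) / (2 * c)) * ‖(c / (c + 1)) • Matrix.toEuclideanLin A ψ₀ - w‖ ^ 2)
    Integrable g volume ∧ (0 < ∫ w, g w) ∧
      ∀ w : EuclideanSpace ℝ (Fin k),
        g w / (∫ w', g w')
          = (2 * Real.pi) ^ (-(k : ℝ) / 2) * Real.sqrt Λ.det *
              Real.exp (-(1 / 2) * ⟪w - μ, Matrix.toEuclideanLin Λ (w - μ)⟫) := by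
  intro Λ μ g
  have hΛ : Λ.PosDef :=
    posDef_smul_transpose_mul_self_add_smul_one (by positivity) (by positivity) A
  have hΛμ : toEuclideanLin Λ μ = toEuclideanLin Aᵀ ψT + toEuclideanLin A ψ₀ := by
    rw [← LinearMap.comp_apply, ← toLpLin_mul_same, mul_nonsing_inv _ hΛ.det_pos.ne'.isUnit,
      toLpLin_one, LinearMap.id_apply]
  set K := (c + 1) / (2 * c) * (‖ψT‖ ^ 2 + (c / (c + 1)) ^ 2 * ‖toEuclideanLin A ψ₀‖ ^ 2)
  have hg : ∀ w, g w = exp ((1 / 2) * ⟪μ, toEuclideanLin Λ μ⟫ - K) *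
      exp (-(1 / 2) * ⟪w - μ, toEuclideanLin Λ (w - μ)⟫) := by
    intro w
    simp only [g, ← exp_add]
    rw [gaussian_factors_exponent hc,
      show (c / (c + 1)) • (Aᵀ * A) + ((c + 1) / c) • 1 = Λ from rfl,
      (isSymmetric_toEuclideanLin_iff.mpr hΛ.isHermitian).inner_sub_map_sub, hΛμ]
    congr 1
    ring
  rw [show g = _ from funext hg]
  simpa only [Fintype.card_fin] using hΛ.gaussian_normalization μ (exp_pos _)

/-- Theorem 1: the product of the two Gaussian conditional factors (for the transitions
`ψ₀ → w` and `w → ψ_T`) has finite positive integral, and after normalization it is exactly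
the multivariate Gaussian density with mean `μ = Λ⁻¹(Aᵀψ_T + Aψ₀)` and covariance `Λ⁻¹`,
where `Λ = (c/(c+1))·AᵀA + ((c+1)/c)·I`. -/
theorem stmt_5 (k : ℕ) (hk : 1 ≤ k) (c : ℝ) (hc : 0 < c)
    (A : Matrix (Fin k) (Fin k) ℝ) (ψ₀ ψT : EuclideanSpace ℝ (Fin k)) :
    let Λ : Matrix (Fin k) (Fin k) ℝ :=
      (c / (c + 1)) • (Aᵀ * A) + ((c + 1) / c) • (1 : Matrix (Fin k) (Fin k) ℝ)
    let μ : EuclideanSpace ℝ (Fin k) :=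
      Matrix.toEuclideanLin Λ⁻¹ (Matrix.toEuclideanLin Aᵀ ψT + Matrix.toEuclideanLin A ψ₀)
    let g : EuclideanSpace ℝ (Fin k) → ℝ := fun w =>
      Real.exp (-((c + 1) / (2 * c)) * ‖(c / (c + 1)) • Matrix.toEuclideanLin A w - ψT‖ ^ 2) *
      Real.exp (-((c + 1) / (2 * c)) * ‖(c / (c + 1)) • Matrix.toEuclideanLin A ψ₀ - w‖ ^ 2)
    Integrable g volume ∧ (0 < ∫ w, g w) ∧
      ∀ w : EuclideanSpace ℝ (Fin k),
        g w / (∫ w', g w')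
          = (2 * Real.pi) ^ (-(k : ℝ) / 2) * Real.sqrt Λ.det *
              Real.exp (-(1 / 2) * ⟪w - μ, Matrix.toEuclideanLin Λ (w - μ)⟫) :=
  stmt_5_general k c hc A ψ₀ ψT
end

section
/- Let k ≥ 1, n ≥ 1, c > 0, and let A be a k × k real matrix. The nk × nk block tridiagonal matrix Λ_chain whose n diagonal k × k blocks each equal Λ = (c/(c+1))·AᵀA + ((c+1)/c)·I, whose subdiagonal blocks each equal -A, whose superdiagonal blocks each equal -Aᵀ, and whose other blocks are zero, is positive definite; in particular it is invertible. Equivalently: for any ψ₁, …, ψ_n ∈ ℝ^k not all zero, setting ψ₀ = ψ_{n+1} = 0, one has ∑_{i=0}^{n} ((c+1)/c)·‖(c/(c+1))·Aψ_i - ψ_{i+1}‖² > 0, and this sum equals the quadratic form of Λ_chain evaluated at the concatenated vector (ψ₁, …, ψ_n). -/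
/-!
With `a = c/(c+1)` and `b = (c+1)/c = a⁻¹`, the chain matrix factors as `b • Mᵀ M`, where `M`
sends the interior waypoints `(ψ₁, …, ψₙ)` to the residuals `(a A ψᵢ - ψᵢ₊₁)_{i=0}^{n}` (with
`ψ₀ = ψₙ₊₁ = 0`). Hence its quadratic form is the chain energy `b ∑ ‖a A ψᵢ - ψᵢ₊₁‖²`, and it is
positive definite because `M` is injective: if all residuals vanish, forward substitution from
`ψ₀ = 0` gives `ψᵢ = 0` for every `i`.
-/

open Matrix Finset
open scoped Kronecker

namespace Matrix

def blockTridiagonal {R κ : Type*} [Zero R] (n : ℕ) (D U L : Matrix κ κ R) :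
    Matrix (Fin n × κ) (Fin n × κ) R :=
  fun p q =>
    if p.1 = q.1 then D p.2 q.2
    else if (p.1 : ℕ) + 1 = (q.1 : ℕ) then U p.2 q.2
    else if (q.1 : ℕ) + 1 = (p.1 : ℕ) then L p.2 q.2
    else 0

theorem smul_blockTridiagonal {R κ : Type*} [MonoidWithZero R] (n : ℕ) (b : R)
    (D U L : Matrix κ κ R) :
    b • blockTridiagonal n D U L = blockTridiagonal n (b • D) (b • U) (b • L) := by
  ext p q
  simp only [blockTridiagonal, smul_apply]
  split_ifs <;> simp

theorem submatrix_one_mul_submatrix_one {R l m o : Type*} [NonAssocSemiring R] [Fintype m]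
    [DecidableEq m] (e : l → m) (f : o → m) :
    (1 : Matrix m m R).submatrix e id * (1 : Matrix m m R).submatrix id f =
      (1 : Matrix m m R).submatrix e f := by
  rw [← submatrix_mul _ _ _ _ _ Function.bijective_id, Matrix.one_mul]

theorem kronecker_mulVec_apply {R l m p q : Type*} [NonUnitalSemiring R] [Fintype m] [Fintype q]
    (P : Matrix l m R) (B : Matrix p q R) (x : m × q → R) (r : l) (j : p) :
    ((P ⊗ₖ B) *ᵥ x) (r, j) = (P *ᵥ fun i => (B *ᵥ fun j' => x (i, j')) j) r := by
  simp [mulVec, dotProduct, Fintype.sum_prod_type, Finset.mul_sum, mul_assoc]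

theorem submatrix_one_succ_mulVec_apply {R : Type*} [NonAssocSemiring R] {n : ℕ} (g : ℕ → R)
    (hg : g 0 = 0) (r : Fin (n + 1)) :
    ((1 : Matrix (Fin (n + 1)) (Fin (n + 1)) R).submatrix id Fin.succ *ᵥ fun i => g (i + 1)) r =
      g r := by
  cases r using Fin.cases with
  | zero => simp [mulVec, dotProduct, hg, (Fin.succ_ne_zero _).symm]
  | succ r => simp [mulVec, dotProduct, one_apply, Fin.succ_inj]

theorem submatrix_one_castSucc_mulVec_apply {R : Type*} [NonAssocSemiring R] {n : ℕ}
    (g : ℕ → R) (hg : g (n + 1) = 0) (r : Fin (n + 1)) :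
    ((1 : Matrix (Fin (n + 1)) (Fin (n + 1)) R).submatrix id Fin.castSucc *ᵥ
      fun i => g (i + 1)) r = g (r + 1) := by
  cases r using Fin.lastCases with
  | last => simp [mulVec, dotProduct, hg, fun i : Fin n => (Fin.castSucc_lt_last i).ne']
  | cast r => simp [mulVec, dotProduct, one_apply, Fin.castSucc_inj]

section Chain

variable {R κ : Type*} [CommRing R] [Fintype κ] [DecidableEq κ]

/-- Block `r ∈ {0, …, n}` of `chainResidual n a A *ᵥ x` is `a A ψᵣ - ψᵣ₊₁`, where `x` lists
`ψ₁, …, ψₙ` and `ψ₀ = ψₙ₊₁ = 0`. -/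
def chainResidual (n : ℕ) (a : R) (A : Matrix κ κ R) : Matrix (Fin (n + 1) × κ) (Fin n × κ) R :=
  a • ((1 : Matrix (Fin (n + 1)) (Fin (n + 1)) R).submatrix id Fin.succ ⊗ₖ A) -
    (1 : Matrix (Fin (n + 1)) (Fin (n + 1)) R).submatrix id Fin.castSucc ⊗ₖ 1

theorem transpose_chainResidual_mul_self (n : ℕ) (a : R) (A : Matrix κ κ R) :
    (chainResidual n a A)ᵀ * chainResidual n a A =
      blockTridiagonal n (a ^ 2 • (Aᵀ * A) + 1) (-a • Aᵀ) (-a • A) := by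
  simp only [chainResidual, transpose_sub, transpose_smul, ← kroneckerMap_transpose,
    transpose_submatrix, transpose_one, Matrix.sub_mul, Matrix.mul_sub, Matrix.smul_mul,
    Matrix.mul_smul, ← mul_kronecker_mul, submatrix_one_mul_submatrix_one,
    submatrix_one _ (Fin.succ_injective _), submatrix_one _ (Fin.castSucc_injective _),
    Matrix.one_mul, Matrix.mul_one]
  ext ⟨i, j⟩ ⟨i', j'⟩
  simp only [blockTridiagonal, sub_apply, smul_apply, kronecker_apply, submatrix_apply,
    one_apply, add_apply, neg_smul, Fin.ext_iff, Fin.val_succ, Fin.val_castSucc]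
  split_ifs <;> first | omega | (simp only [smul_eq_mul]; ring)

theorem chainResidual_mulVec (n : ℕ) (a : R) (A : Matrix κ κ R) (u : ℕ → κ → R)
    (h0 : u 0 = 0) (hn : u (n + 1) = 0) :
    chainResidual n a A *ᵥ (fun p : Fin n × κ => u (p.1 + 1) p.2) =
      fun q => a * (A *ᵥ u q.1) q.2 - u (q.1 + 1) q.2 := by
  ext ⟨r, j⟩
  have hsucc := submatrix_one_succ_mulVec_apply (fun m => (A *ᵥ u m) j) (by simp [h0]) r
  have hcast := submatrix_one_castSucc_mulVec_apply (fun m => u m j) (by simp [hn]) r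
  simp only [chainResidual, sub_mulVec, smul_mulVec, Pi.sub_apply, Pi.smul_apply,
    kronecker_mulVec_apply, one_mulVec, smul_eq_mul] at hsucc hcast ⊢
  rw [hsucc, hcast]

theorem chainResidual_mulVec_injective (n : ℕ) (a : R) (A : Matrix κ κ R) :
    Function.Injective (chainResidual n a A).mulVec := by
  refine (injective_iff_map_eq_zero (chainResidual n a A).mulVecLin).mpr fun x hx => ?_
  set u : ℕ → κ → R := fun m j => if h : m ≠ 0 ∧ m ≤ n then x (⟨m - 1, by omega⟩, j) else 0
  have hxu : x = fun p => u (p.1 + 1) p.2 := by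
    ext ⟨i, j⟩
    simp [u, Nat.succ_le_of_lt i.isLt]
  have hu0 : u 0 = 0 := by ext j; simp [u]
  have hun : u (n + 1) = 0 := by ext j; simp [u]
  rw [mulVecLin_apply, hxu, chainResidual_mulVec n a A u hu0 hun] at hx
  have hstep : ∀ m < n, u (m + 1) = a • (A *ᵥ u m) := fun m hm => by
    ext j
    have h := congrFun hx (⟨m, by omega⟩, j)
    simp only [Pi.zero_apply, sub_eq_zero] at h
    rw [Pi.smul_apply, smul_eq_mul, h]
  have hzero : ∀ m ≤ n, u m = 0 := by
    intro m hm
    induction m with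
    | zero => exact hu0
    | succ m ih => rw [hstep m hm, ih (by omega), mulVec_zero, smul_zero]
  rw [hxu]
  ext ⟨i, j⟩
  simp [hzero (i + 1) i.isLt]

end Chain

theorem sum_norm_sq_eq_chainResidual_mulVec_dotProduct {κ : Type*} [Fintype κ] [DecidableEq κ]
    (n : ℕ) (a : ℝ) (A : Matrix κ κ ℝ) (ψ : ℕ → EuclideanSpace ℝ κ) (h0 : ψ 0 = 0)
    (hn : ψ (n + 1) = 0) :
    ∑ i ∈ Finset.range (n + 1), ‖a • toEuclideanLin A (ψ i) - ψ (i + 1)‖ ^ 2 =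
      (chainResidual n a A *ᵥ fun p : Fin n × κ => ψ (p.1 + 1) p.2) ⬝ᵥ
        (chainResidual n a A *ᵥ fun p : Fin n × κ => ψ (p.1 + 1) p.2) := by
  rw [chainResidual_mulVec n a A (fun i => ψ i) (by simp [h0]) (by simp [hn]), dotProduct,
    Fintype.sum_prod_type, ← Fin.sum_univ_eq_sum_range]
  refine Finset.sum_congr rfl fun r _ => ?_
  rw [EuclideanSpace.real_norm_sq_eq]
  simp [sq]

end Matrix

theorem stmt_8_general (k n : ℕ) (c : ℝ) (hc : 0 < c)
    (A : Matrix (Fin k) (Fin k) ℝ) :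
    let Λ : Matrix (Fin k) (Fin k) ℝ :=
      (c / (c + 1)) • (Aᵀ * A) + ((c + 1) / c) • (1 : Matrix (Fin k) (Fin k) ℝ)
    let Λchain : Matrix (Fin n × Fin k) (Fin n × Fin k) ℝ := fun p q =>
      if p.1 = q.1 then Λ p.2 q.2
      else if (p.1 : ℕ) + 1 = (q.1 : ℕ) then (-Aᵀ) p.2 q.2
      else if (q.1 : ℕ) + 1 = (p.1 : ℕ) then (-A) p.2 q.2
      else 0
    Λchain.PosDef ∧ IsUnit Λchain ∧
      ∀ ψ : ℕ → EuclideanSpace ℝ (Fin k), ψ 0 = 0 → ψ (n + 1) = 0 →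
        (∑ i ∈ Finset.range (n + 1),
            ((c + 1) / c) * ‖(c / (c + 1)) • Matrix.toEuclideanLin A (ψ i) - ψ (i + 1)‖ ^ 2
          = (fun p : Fin n × Fin k => ψ ((p.1 : ℕ) + 1) p.2) ⬝ᵥ
              (Λchain *ᵥ fun p : Fin n × Fin k => ψ ((p.1 : ℕ) + 1) p.2)) ∧
        ((∃ i : ℕ, 1 ≤ i ∧ i ≤ n ∧ ψ i ≠ 0) →
          0 < ∑ i ∈ Finset.range (n + 1),
            ((c + 1) / c) * ‖(c / (c + 1)) • Matrix.toEuclideanLin A (ψ i) - ψ (i + 1)‖ ^ 2) := by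
  intro Λ Λchain
  set M := chainResidual n (c / (c + 1)) A
  have hba : (c + 1) / c * (c / (c + 1)) = 1 := by field_simp
  have hfactor : Λchain = ((c + 1) / c) • (Mᵀ * M) := by
    rw [transpose_chainResidual_mul_self, smul_blockTridiagonal]
    show blockTridiagonal n Λ (-Aᵀ) (-A) = _
    congr 1
    · rw [smul_add, smul_smul, pow_two, ← mul_assoc, hba, one_mul]
    all_goals rw [smul_smul, mul_neg, hba, neg_one_smul]
  have hposdef : Λchain.PosDef := by
    rw [hfactor, ← conjTranspose_eq_transpose_of_trivial]
    exact (PosDef.conjTranspose_mul_self M (chainResidual_mulVec_injective _ _ _)).smul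
      (by positivity)
  refine ⟨hposdef, hposdef.isUnit, fun ψ h0 hn1 => ?_⟩
  have hquad : ∑ i ∈ Finset.range (n + 1),
      ((c + 1) / c) * ‖(c / (c + 1)) • Matrix.toEuclideanLin A (ψ i) - ψ (i + 1)‖ ^ 2
        = (fun p : Fin n × Fin k => ψ ((p.1 : ℕ) + 1) p.2) ⬝ᵥ
            (Λchain *ᵥ fun p : Fin n × Fin k => ψ ((p.1 : ℕ) + 1) p.2) := by
    rw [← mul_sum, sum_norm_sq_eq_chainResidual_mulVec_dotProduct n _ A ψ h0 hn1, hfactor,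
      smul_mulVec, ← mulVec_mulVec, dotProduct_smul, dotProduct_mulVec _ Mᵀ, vecMul_transpose,
      smul_eq_mul]
  refine ⟨hquad, fun ⟨i, hi1, hin, hi⟩ => hquad ▸ ?_⟩
  obtain ⟨j, hj⟩ : ∃ j, ψ i j ≠ 0 := by
    by_contra! h
    exact hi (by ext j; simp [h j])
  have hx : (fun p : Fin n × Fin k => ψ ((p.1 : ℕ) + 1) p.2) ≠ 0 := fun h => hj <| by
    simpa [Nat.sub_add_cancel hi1] using congrFun h (⟨i - 1, by omega⟩, j)
  simpa using hposdef.dotProduct_mulVec_pos hx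

/-- Theorem 2: the `nk × nk` block tridiagonal precision matrix with diagonal blocks
`Λ = (c/(c+1))·AᵀA + ((c+1)/c)·I`, subdiagonal blocks `-A` and superdiagonal blocks `-Aᵀ`
is positive definite (hence invertible).  Equivalently, for `ψ₁, …, ψ_n` not all zero and
`ψ₀ = ψ_{n+1} = 0`, the chain energy `∑_{i=0}^{n} ((c+1)/c)·‖(c/(c+1))·Aψ_i - ψ_{i+1}‖²`
is positive, and it equals the quadratic form of the block matrix at `(ψ₁, …, ψ_n)`. -/
theorem stmt_8 (k n : ℕ) (hk : 1 ≤ k) (hn : 1 ≤ n) (c : ℝ) (hc : 0 < c)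
    (A : Matrix (Fin k) (Fin k) ℝ) :
    let Λ : Matrix (Fin k) (Fin k) ℝ :=
      (c / (c + 1)) • (Aᵀ * A) + ((c + 1) / c) • (1 : Matrix (Fin k) (Fin k) ℝ)
    let Λchain : Matrix (Fin n × Fin k) (Fin n × Fin k) ℝ := fun p q =>
      if p.1 = q.1 then Λ p.2 q.2
      else if (p.1 : ℕ) + 1 = (q.1 : ℕ) then (-Aᵀ) p.2 q.2
      else if (q.1 : ℕ) + 1 = (p.1 : ℕ) then (-A) p.2 q.2
      else 0
    Λchain.PosDef ∧ IsUnit Λchain ∧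
      ∀ ψ : ℕ → EuclideanSpace ℝ (Fin k), ψ 0 = 0 → ψ (n + 1) = 0 →
        (∑ i ∈ Finset.range (n + 1),
            ((c + 1) / c) * ‖(c / (c + 1)) • Matrix.toEuclideanLin A (ψ i) - ψ (i + 1)‖ ^ 2
          = (fun p : Fin n × Fin k => ψ ((p.1 : ℕ) + 1) p.2) ⬝ᵥ
              (Λchain *ᵥ fun p : Fin n × Fin k => ψ ((p.1 : ℕ) + 1) p.2)) ∧
        ((∃ i : ℕ, 1 ≤ i ∧ i ≤ n ∧ ψ i ≠ 0) →
          0 < ∑ i ∈ Finset.range (n + 1),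
            ((c + 1) / c) * ‖(c / (c + 1)) • Matrix.toEuclideanLin A (ψ i) - ψ (i + 1)‖ ^ 2) :=
  stmt_8_general k n c hc A
end
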